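/- Let a(s) = s² + a₁s + a₂ with a₁, a₂ > 0 and c(s) = s + x₁ with 0 < x₁ < a₁. Then c(s)/( a(s)) satisfies Re[c(jω)/a(jω)] > 0 for all real ω, and hence for sufficiently small δ > 0, (c(s) + δ(s² + s + 1))/a(s) is strictly positive real. -/

import Mathlib

open Polynomial Complex

noncomputable def evalI (p : Polynomial ℝ) (ω : ℝ) : ℂ :=
  Polynomial.aeval ((ω : ℂ) * Complex.I) p

def HurwitzStable (p : Polynomial ℝ) : Prop :=
  ∀ z : ℂ, Polynomial.aeval z p = 0 → z.re < 0

def SPR (p q : Polynomial ℝ) : Prop :=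
  p.degree = q.degree ∧ HurwitzStable q ∧
    ∀ ω : ℝ, 0 < (evalI p ω / evalI q ω).re

/-! On the imaginary axis, `Re[p(iω) / q(iω)]` has the sign of
`Re p(iω) · Re q(iω) + Im p(iω) · Im q(iω)`, which for `p = b₂s² + b₁s + b₀` and
`q = s² + a₁s + a₂` is the biquadratic `b₂ω⁴ + (b₁a₁ - b₀ - b₂a₂)ω² + b₀a₂`. Its coefficients
are nonnegative with positive constant term once `b₀ + b₂a₂ ≤ b₁a₁`; for `c(s) = s + x₁` this
is `x₁ < a₁`, and perturbing by `δ(s² + s + 1)` keeps it for `δ (a₂ + 1) < a₁ - x₁`. -/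

lemma Complex.re_div_pos_of {z w : ℂ} (hw : w ≠ 0) (h : 0 < z.re * w.re + z.im * w.im) :
    0 < (z / w).re := by
  rw [div_re, ← add_div]
  exact div_pos h (normSq_pos.2 hw)

lemma evalI_quadratic (b₂ b₁ b₀ ω : ℝ) :
    evalI (C b₂ * X ^ 2 + C b₁ * X + C b₀) ω = ⟨b₀ - b₂ * ω ^ 2, b₁ * ω⟩ := by
  apply Complex.ext <;> simp [evalI, mul_pow, ← ofReal_pow]; ring

lemma evalI_monic_quadratic (a₁ a₂ ω : ℝ) :
    evalI (X ^ 2 + C a₁ * X + C a₂) ω = ⟨a₂ - ω ^ 2, a₁ * ω⟩ := by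
  simpa using evalI_quadratic 1 a₁ a₂ ω

lemma HurwitzStable.evalI_ne_zero {q : ℝ[X]} (hq : HurwitzStable q) (ω : ℝ) :
    evalI q ω ≠ 0 := fun h0 => by
  simpa using hq _ h0

lemma hurwitzStable_monic_quadratic {a₁ a₂ : ℝ} (ha₁ : 0 < a₁) (ha₂ : 0 < a₂) :
    HurwitzStable (X ^ 2 + C a₁ * X + C a₂) := by
  intro z hz
  simp only [map_add, map_mul, aeval_X, aeval_C, coe_algebraMap, Complex.ext_iff,
    add_re, add_im, mul_re, mul_im, ofReal_re, ofReal_im, zero_re, zero_im, pow_two] at hz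
  obtain ⟨hre, him⟩ := hz
  by_contra! hx
  have hy : z.im = 0 := by
    have : z.im * (2 * z.re + a₁) = 0 := by linarith
    exact (mul_eq_zero.1 this).resolve_right (by linarith)
  rw [hy] at hre
  nlinarith

lemma re_evalI_div_monic_quadratic_pos {b₂ b₁ b₀ a₁ a₂ : ℝ} (ha₁ : 0 < a₁) (ha₂ : 0 < a₂)
    (hb₂ : 0 ≤ b₂) (hb₀ : 0 < b₀) (hb : b₀ + b₂ * a₂ ≤ b₁ * a₁) (ω : ℝ) :
    0 < (evalI (C b₂ * X ^ 2 + C b₁ * X + C b₀) ω / evalI (X ^ 2 + C a₁ * X + C a₂) ω).re := by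
  apply Complex.re_div_pos_of ((hurwitzStable_monic_quadratic ha₁ ha₂).evalI_ne_zero ω)
  rw [evalI_quadratic, evalI_monic_quadratic]
  calc 0 < b₂ * (ω ^ 2) ^ 2 + (b₁ * a₁ - b₀ - b₂ * a₂) * ω ^ 2 + b₀ * a₂ := by
        have := mul_nonneg hb₂ (sq_nonneg (ω ^ 2))
        have := mul_nonneg (sub_nonneg.2 hb) (sq_nonneg ω)
        nlinarith [mul_pos hb₀ ha₂]
    _ = _ := by simp only; ring

lemma spr_quadratic_monic_quadratic {b₂ b₁ b₀ a₁ a₂ : ℝ} (ha₁ : 0 < a₁) (ha₂ : 0 < a₂)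
    (hb₂ : 0 < b₂) (hb₀ : 0 < b₀) (hb : b₀ + b₂ * a₂ ≤ b₁ * a₁) :
    SPR (C b₂ * X ^ 2 + C b₁ * X + C b₀) (X ^ 2 + C a₁ * X + C a₂) := by
  refine ⟨?_, hurwitzStable_monic_quadratic ha₁ ha₂,
    re_evalI_div_monic_quadratic_pos ha₁ ha₂ hb₂.le hb₀ hb⟩
  rw [degree_quadratic hb₂.ne']
  simpa using (degree_quadratic (a := (1 : ℝ)) (b := a₁) (c := a₂) one_ne_zero).symm

theorem quadratic_spr_example (a₁ a₂ x₁ : ℝ)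
    (ha₁ : 0 < a₁) (ha₂ : 0 < a₂) (hx₁ : 0 < x₁) (hx : x₁ < a₁) :
    (∀ ω : ℝ,
      0 < (evalI (Polynomial.X + Polynomial.C x₁) ω /
        evalI (Polynomial.X ^ 2 + Polynomial.C a₁ * Polynomial.X + Polynomial.C a₂) ω).re) ∧
    ∃ δ₀ > (0 : ℝ), ∀ δ : ℝ, 0 < δ → δ < δ₀ →
      SPR (Polynomial.X + Polynomial.C x₁ +
          Polynomial.C δ * (Polynomial.X ^ 2 + Polynomial.X + 1))
        (Polynomial.X ^ 2 + Polynomial.C a₁ * Polynomial.X + Polynomial.C a₂) := by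
  have hlin : (X + C x₁ : ℝ[X]) = C 0 * X ^ 2 + C 1 * X + C x₁ := by simp
  refine ⟨hlin ▸ re_evalI_div_monic_quadratic_pos ha₁ ha₂ le_rfl hx₁ (by linarith),
    (a₁ - x₁) / (a₂ + 1), div_pos (by linarith) (by linarith), fun δ hδ hδ₀ => ?_⟩
  have hpert : X + C x₁ + C δ * (X ^ 2 + X + 1) = C δ * X ^ 2 + C (1 + δ) * X + C (x₁ + δ) := by
    simp only [map_add, map_one]
    ring
  rw [hpert]
  rw [lt_div_iff₀ (by linarith)] at hδ₀
  exact spr_quadratic_monic_quadratic ha₁ ha₂ hδ (by linarith) (by nlinarith)
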